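/- Let H be a cocommutative bialgebra over a field k of characteristic different from 2 (cocommutative means τ∘Δ = Δ), and let (d,φ) be a twisted derivation of H with τ(φ) = −φ. Then d is a bialgebra derivation, i.e. Δ(d(x)) = (d⊗I + I⊗d)(Δ(x)) for all x ∈ H, and [φ, Δ(x)] = 0 for all x ∈ H; i.e. (d,φ) is separated. -/

import Mathlib

/-! Applying the flip `τ` to the defining identity of a twisted derivation, the left-hand side
`(d⊗I + I⊗d)(Δx) − Δ(dx)` is `τ`-invariant because `Δx` is, while the right-hand side
`[φ, Δx]` changes sign because `φ` does. Hence `[φ, Δx] = −[φ, Δx]`, which vanishes when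
`2 ≠ 0`; the identity then says that `d` is a coderivation. -/

open scoped TensorProduct

noncomputable section

variable (K H : Type*) [Field K] [Ring H] [Bialgebra K H]

/-- The comultiplication of the bialgebra `H`. -/
def cm : H →ₗ[K] H ⊗[K] H := Coalgebra.comul

/-- The counit of the bialgebra `H`. -/
def cu : H →ₗ[K] K := Coalgebra.counit

/-- A twisted derivation of the bialgebra `H` is a pair `(d, φ)` where `d` is a
`K`-algebra derivation of `H` and `φ ∈ H ⊗ H`, such that
`(d⊗I + I⊗d)(Δ(x)) − Δ(d(x)) = [φ, Δ(x)]` for all `x`,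
`1⊗φ + (I⊗Δ)(φ) = φ⊗1 + (Δ⊗I)(φ)` (co-Hochschild 2-cocycle condition), and
`ε∘d = 0`, `(ε⊗I)(φ) = 0 = (I⊗ε)(φ)`. -/
structure IsTwistedDerivation (d : H →ₗ[K] H) (φ : H ⊗[K] H) : Prop where
  leibniz : ∀ x y : H, d (x * y) = d x * y + x * d y
  conj : ∀ x : H,
    (LinearMap.rTensor H d + LinearMap.lTensor H d) (cm K H x) - cm K H (d x)
      = φ * cm K H x - cm K H x * φ
  cocycle : (1 : H) ⊗ₜ[K] φ + LinearMap.lTensor H (cm K H) φ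
      = TensorProduct.assoc K H H H (φ ⊗ₜ[K] (1 : H) + LinearMap.rTensor H (cm K H) φ)
  counit_comp : ∀ x : H, cu K H (d x) = 0
  counit_left : TensorProduct.lid K H (LinearMap.rTensor H (cu K H) φ) = 0
  counit_right : TensorProduct.rid K H (LinearMap.lTensor H (cu K H) φ) = 0

/-- The inner derivation `[a, −] : x ↦ ax − xa`. -/
def innerDer (a : H) : H →ₗ[K] H := LinearMap.mulLeft K a - LinearMap.mulRight K a

/-- The coboundary twist `a⊗1 + 1⊗a − Δ(a)`. -/
def bdryTwist (a : H) : H ⊗[K] H := a ⊗ₜ[K] (1 : H) + (1 : H) ⊗ₜ[K] a - cm K H a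

theorem eq_zero_of_eq_neg {R M : Type*} [DivisionRing R] [AddCommGroup M] [Module R M]
    (h2 : (2 : R) ≠ 0) {v : M} (hv : v = -v) : v = 0 := by
  have h2v : (2 : R) • v = 0 := by
    rw [two_smul]
    nth_rewrite 1 [hv]
    exact neg_add_cancel v
  exact (smul_eq_zero.mp h2v).resolve_left h2

namespace TensorProduct

theorem comm_mul {R A B : Type*} [CommSemiring R] [Semiring A] [Semiring B] [Algebra R A]
    [Algebra R B] (z w : A ⊗[R] B) :
    TensorProduct.comm R A B (z * w) = TensorProduct.comm R A B z * TensorProduct.comm R A B w :=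
  map_mul (Algebra.TensorProduct.comm R A B) z w

theorem comm_mul_sub_mul_eq_neg {R A : Type*} [CommRing R] [Ring A] [Algebra R A]
    {φ z : A ⊗[R] A} (hφ : TensorProduct.comm R A A φ = -φ)
    (hz : TensorProduct.comm R A A z = z) :
    TensorProduct.comm R A A (φ * z - z * φ) = -(φ * z - z * φ) := by
  rw [map_sub, comm_mul, comm_mul, hφ, hz, neg_mul, mul_neg, neg_sub, sub_neg_eq_add,
    neg_add_eq_sub]

theorem comm_rTensor_add_lTensor {R M : Type*} [CommSemiring R] [AddCommMonoid M] [Module R M]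
    (f : M →ₗ[R] M) (z : M ⊗[R] M) :
    TensorProduct.comm R M M ((LinearMap.rTensor M f + LinearMap.lTensor M f) z)
      = (LinearMap.rTensor M f + LinearMap.lTensor M f) (TensorProduct.comm R M M z) := by
  rw [LinearMap.add_apply, LinearMap.add_apply, map_add, ← LinearMap.lTensor_comm,
    ← LinearMap.rTensor_comm, add_comm]

end TensorProduct

variable {K H} in
theorem IsTwistedDerivation.commutator_eq_zero {d : H →ₗ[K] H} {φ : H ⊗[K] H}
    (h : IsTwistedDerivation K H d φ) (hchar : (2 : K) ≠ 0)
    (hcoc : ∀ x : H, TensorProduct.comm K H H (cm K H x) = cm K H x)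
    (hanti : TensorProduct.comm K H H φ = -φ) (x : H) :
    φ * cm K H x - cm K H x * φ = 0 := by
  have hsymm : TensorProduct.comm K H H (φ * cm K H x - cm K H x * φ)
      = φ * cm K H x - cm K H x * φ := by
    rw [← h.conj x, map_sub, TensorProduct.comm_rTensor_add_lTensor, hcoc, hcoc]
  exact eq_zero_of_eq_neg hchar
    (hsymm.symm.trans (TensorProduct.comm_mul_sub_mul_eq_neg hanti (hcoc x)))

theorem cocommutative_antisymmetric_separated (hchar : (2 : K) ≠ 0)
    (hcoc : ∀ x : H, TensorProduct.comm K H H (cm K H x) = cm K H x)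
    (d : H →ₗ[K] H) (φ : H ⊗[K] H) (h : IsTwistedDerivation K H d φ)
    (hanti : TensorProduct.comm K H H φ = -φ) :
    (∀ x : H, cm K H (d x) = (LinearMap.rTensor H d + LinearMap.lTensor H d) (cm K H x)) ∧
    (∀ x : H, φ * cm K H x = cm K H x * φ) := by
  have hcomm := h.commutator_eq_zero hchar hcoc hanti
  refine ⟨fun x => ?_, fun x => sub_eq_zero.mp (hcomm x)⟩
  have hconj := h.conj x
  rw [hcomm x, sub_eq_zero] at hconj
  exact hconj.symm

end
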